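/- arXiv:1807.06646 — 4 statements merged into one kernel-verified Lean document; each statement's English description precedes it below -/
import Mathlib

section
/- Let γ>1 and let U₀=(u₀,0,p₀,ρ₀) be a state with ρ₀>0, p₀>0 and u₀>c₀, where c₀=√(γp₀/ρ₀). Then r̃₁(U₀)·∇λ₁(U₀) = r̃₄(U₀)·∇λ₄(U₀) and this common value is strictly positive; consequently the normalization factors κ_j(U₀) := 1/(r̃_j(U₀)·∇λ_j(U₀)) (chosen so that the normalized eigenvectors r_j = κ_j r̃_j satisfy r_j·∇λ_j = 1) satisfy κ₁(U₀) = κ₄(U₀) > 0. Moreover, there is an open neighborhood of U₀ on which r̃_j(U)·∇λ_j(U) > 0 for j=1,4, so κ₁ and κ₄ are positive on that neighborhood. -/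
noncomputable section

/-- Sonic speed `c = √(γ p / ρ)` at a state `U = (u, v, p, ρ)`. -/
def cs (γ : ℝ) (U : Fin 4 → ℝ) : ℝ := Real.sqrt (γ * U 2 / U 3)

/-- First characteristic speed `λ₁(U)` of the steady Euler system in the `x`-direction. -/
def lam1 (γ : ℝ) (U : Fin 4 → ℝ) : ℝ :=
  (U 0 * U 1 - cs γ U * Real.sqrt (U 0 ^ 2 + U 1 ^ 2 - cs γ U ^ 2)) /
    (U 0 ^ 2 - cs γ U ^ 2)

/-- Fourth characteristic speed `λ₄(U)` of the steady Euler system in the `x`-direction. -/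
def lam4 (γ : ℝ) (U : Fin 4 → ℝ) : ℝ :=
  (U 0 * U 1 + cs γ U * Real.sqrt (U 0 ^ 2 + U 1 ^ 2 - cs γ U ^ 2)) /
    (U 0 ^ 2 - cs γ U ^ 2)

/-- Unnormalized eigenvector `r̃₁(U) = (-λ₁, 1, ρ(λ₁u - v), ρ(λ₁u - v)/c²)`. -/
def rt1 (γ : ℝ) (U : Fin 4 → ℝ) : Fin 4 → ℝ :=
  ![-(lam1 γ U), 1, U 3 * (lam1 γ U * U 0 - U 1),
    U 3 * (lam1 γ U * U 0 - U 1) / cs γ U ^ 2]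

/-- Unnormalized eigenvector `r̃₄(U) = (-λ₄, 1, ρ(λ₄u - v), ρ(λ₄u - v)/c²)`. -/
def rt4 (γ : ℝ) (U : Fin 4 → ℝ) : Fin 4 → ℝ :=
  ![-(lam4 γ U), 1, U 3 * (lam4 γ U * U 0 - U 1),
    U 3 * (lam4 γ U * U 0 - U 1) / cs γ U ^ 2]

/-!
Write `λ_σ = (uv + σ c s) / (u² - c²)` with `s = √(u² + v² - c²)` and `σ = ∓1`. Both speeds
are roots of `(u² - c²) λ² - 2uv λ + v² - c² = 0`, and along `r̃_σ` the quantity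
`c² = γ p / ρ` changes at rate `(γ - 1)(λu - v)`. Differentiating the quadratic along `r̃_σ`
therefore gives `2 c s (r̃_σ · ∇λ_σ) = (γ + 1)(λ_σ² + 1) σ (uλ_σ - v)`, whose right side is
positive on the whole supersonic region `c < u`. At `v = 0` it becomes
`r̃_σ · ∇λ_σ = (γ + 1) u³ / (2 (u² - c²)²)` for both signs.
-/

def charSpeed (γ σ : ℝ) (U : Fin 4 → ℝ) : ℝ :=
  (U 0 * U 1 + σ * (cs γ U * √(U 0 ^ 2 + U 1 ^ 2 - cs γ U ^ 2))) / (U 0 ^ 2 - cs γ U ^ 2)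

def charVec (γ σ : ℝ) (U : Fin 4 → ℝ) : Fin 4 → ℝ :=
  ![-(charSpeed γ σ U), 1, U 3 * (charSpeed γ σ U * U 0 - U 1),
    U 3 * (charSpeed γ σ U * U 0 - U 1) / cs γ U ^ 2]

lemma lam1_eq_charSpeed (γ : ℝ) : lam1 γ = charSpeed γ (-1) := by
  funext U
  simp only [lam1, charSpeed]
  ring

lemma lam4_eq_charSpeed (γ : ℝ) : lam4 γ = charSpeed γ 1 := by
  funext U
  simp only [lam4, charSpeed]
  ring

lemma rt1_eq_charVec (γ : ℝ) : rt1 γ = charVec γ (-1) := by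
  funext U
  simp only [rt1, charVec, lam1_eq_charSpeed]

lemma rt4_eq_charVec (γ : ℝ) : rt4 γ = charVec γ 1 := by
  funext U
  simp only [rt4, charVec, lam4_eq_charSpeed]

def supersonic (γ : ℝ) : Set (Fin 4 → ℝ) := {U | 0 < U 2 ∧ 0 < U 3 ∧ cs γ U < U 0}

lemma isOpen_supersonic (γ : ℝ) : IsOpen (supersonic γ) := by
  have hpos : IsOpen {U : Fin 4 → ℝ | 0 < U 2 ∧ 0 < U 3} :=
    (isOpen_lt continuous_const (continuous_apply 2)).and
      (isOpen_lt continuous_const (continuous_apply 3))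
  have hcs : ContinuousOn (fun U : Fin 4 → ℝ => U 0 - cs γ U) {U | 0 < U 2 ∧ 0 < U 3} := by
    unfold cs
    exact (continuous_apply 0).continuousOn.sub <| Real.continuous_sqrt.comp_continuousOn <|
      (continuousOn_const.mul (continuous_apply 2).continuousOn).div
        (continuous_apply 3).continuousOn fun U hU => hU.2.ne'
  convert hcs.isOpen_inter_preimage hpos (isOpen_Ioi (a := 0)) using 1
  ext U
  simp [supersonic, and_assoc]

section supersonic

variable {γ : ℝ} {U : Fin 4 → ℝ} (hγ : 0 < γ) (hU : U ∈ supersonic γ)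
include hγ hU

lemma sq_cs_of_mem_supersonic : cs γ U ^ 2 = γ * U 2 / U 3 :=
  Real.sq_sqrt (div_pos (mul_pos hγ hU.1) hU.2.1).le

lemma cs_pos_of_mem_supersonic : 0 < cs γ U :=
  Real.sqrt_pos.2 (div_pos (mul_pos hγ hU.1) hU.2.1)

lemma sq_sub_sq_cs_pos : 0 < U 0 ^ 2 - cs γ U ^ 2 := by
  have := cs_pos_of_mem_supersonic hγ hU
  nlinarith [hU.2.2]

lemma sq_add_sq_sub_sq_cs_pos : 0 < U 0 ^ 2 + U 1 ^ 2 - cs γ U ^ 2 := by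
  nlinarith [sq_sub_sq_cs_pos hγ hU, sq_nonneg (U 1)]

lemma differentiableAt_charSpeed (σ : ℝ) : DifferentiableAt ℝ (charSpeed γ σ) U := by
  have h3 : U 3 ≠ 0 := hU.2.1.ne'
  have hq : γ * U 2 / U 3 ≠ 0 := (div_pos (mul_pos hγ hU.1) hU.2.1).ne'
  have hs := (sq_add_sq_sub_sq_cs_pos hγ hU).ne'
  have hd := (sq_sub_sq_cs_pos hγ hU).ne'
  have hcs : DifferentiableAt ℝ (cs γ) U := by
    unfold cs
    fun_prop (disch := assumption)
  unfold charSpeed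
  fun_prop (disch := assumption)

lemma charSpeed_mul_sq_sub_sq_cs (σ : ℝ) : charSpeed γ σ U * (U 0 ^ 2 - cs γ U ^ 2) =
    U 0 * U 1 + σ * (cs γ U * √(U 0 ^ 2 + U 1 ^ 2 - cs γ U ^ 2)) :=
  div_mul_cancel₀ _ (sq_sub_sq_cs_pos hγ hU).ne'

lemma charSpeed_quadratic {σ : ℝ} (hσ : σ ^ 2 = 1) :
    (U 0 ^ 2 - γ * U 2 / U 3) * charSpeed γ σ U ^ 2 - 2 * U 0 * U 1 * charSpeed γ σ U
      + U 1 ^ 2 - γ * U 2 / U 3 = 0 := by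
  have hs := Real.sq_sqrt (sq_add_sq_sub_sq_cs_pos hγ hU).le
  have hd := (sq_sub_sq_cs_pos hγ hU).ne'
  rw [← sq_cs_of_mem_supersonic hγ hU]
  unfold charSpeed
  field_simp
  linear_combination (cs γ U ^ 2 * σ ^ 2) * hs + cs γ U ^ 2 * (U 0 ^ 2 + U 1 ^ 2 - cs γ U ^ 2) * hσ

lemma fderiv_charSpeed_charVec {σ : ℝ} (hσ : σ ^ 2 = 1) :
    2 * cs γ U * √(U 0 ^ 2 + U 1 ^ 2 - cs γ U ^ 2) * fderiv ℝ (charSpeed γ σ) U (charVec γ σ U)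
      = (γ + 1) * (charSpeed γ σ U ^ 2 + 1) * (σ * (U 0 * charSpeed γ σ U - U 1)) := by
  set r := charVec γ σ U
  set L := fderiv ℝ (charSpeed γ σ) U r
  set l := charSpeed γ σ U
  have hline : HasDerivAt (fun t : ℝ => U + t • r) r 0 := by
    simpa using ((hasDerivAt_id (0 : ℝ)).smul_const r).const_add U
  have hcoord (i : Fin 4) : HasDerivAt (fun t : ℝ => U i + t * r i) (r i) 0 := by
    simpa using ((hasDerivAt_id (0 : ℝ)).mul_const (r i)).const_add (U i)
  have hl : HasDerivAt (fun t : ℝ => charSpeed γ σ (U + t • r)) L 0 :=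
    (differentiableAt_charSpeed hγ hU σ).hasFDerivAt.comp_hasDerivAt_of_eq 0 hline (by simp)
  have hq : HasDerivAt (fun t : ℝ => γ * (U 2 + t * r 2) / (U 3 + t * r 3))
      ((γ - 1) * (l * U 0 - U 1)) 0 := by
    refine (((hcoord 2).const_mul γ).div (hcoord 3) (by simpa using hU.2.1.ne')).congr_deriv ?_
    have hr2 : r 2 = U 3 * (l * U 0 - U 1) := rfl
    have hr3 : r 3 = U 3 * (l * U 0 - U 1) / cs γ U ^ 2 := rfl
    have h2 := hU.1.ne'
    have h3 := hU.2.1.ne'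
    rw [hr2, hr3, sq_cs_of_mem_supersonic hγ hU]
    field_simp
    ring
  have hQ := (((((hcoord 0).pow 2).sub hq).mul (hl.pow 2)).sub
    ((((hcoord 0).const_mul 2).mul (hcoord 1)).mul hl)).add ((hcoord 1).pow 2) |>.sub hq
  have hQ0 : ∀ᶠ t in nhds 0, ((U 0 + t * r 0) ^ 2 - γ * (U 2 + t * r 2) / (U 3 + t * r 3))
      * charSpeed γ σ (U + t • r) ^ 2
      - 2 * (U 0 + t * r 0) * (U 1 + t * r 1) * charSpeed γ σ (U + t • r) + (U 1 + t * r 1) ^ 2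
      - γ * (U 2 + t * r 2) / (U 3 + t * r 3) = 0 := by
    have hU' : U + (0 : ℝ) • r ∈ supersonic γ := by simpa using hU
    filter_upwards [hline.continuousAt.preimage_mem_nhds ((isOpen_supersonic γ).mem_nhds hU')]
      with t ht
    simpa using charSpeed_quadratic hγ ht hσ
  have hE := hQ.unique ((hasDerivAt_const (0 : ℝ) (0 : ℝ)).congr_of_eventuallyEq hQ0)
  have hr0 : r 0 = -l := rfl
  have hr1 : r 1 = 1 := rfl
  simp only [Nat.cast_ofNat, hr0, hr1, mul_neg, zero_mul, neg_zero, add_zero, Nat.add_one_sub_one,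
    pow_one, Pi.pow_apply, zero_smul, Pi.sub_apply, mul_one, neg_mul, Pi.mul_apply] at hE
  rw [← sq_cs_of_mem_supersonic hγ hU] at hE
  linear_combination σ * hE - 2 * cs γ U * √(U 0 ^ 2 + U 1 ^ 2 - cs γ U ^ 2) * L * hσ
    - 2 * σ * L * charSpeed_mul_sq_sub_sq_cs hγ hU σ

lemma sign_mul_charSpeed_mul_sub_pos {σ : ℝ} (hσ : σ ^ 2 = 1) :
    0 < σ * (U 0 * charSpeed γ σ U - U 1) := by
  have hc := cs_pos_of_mem_supersonic hγ hU
  have hd := sq_sub_sq_cs_pos hγ hU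
  have hs0 := sq_add_sq_sub_sq_cs_pos hγ hU
  have hs := Real.sq_sqrt hs0.le
  set c := cs γ U
  set s := √(U 0 ^ 2 + U 1 ^ 2 - c ^ 2)
  have hus : 0 ≤ U 0 * s := mul_nonneg (hc.trans hU.2.2).le (Real.sqrt_nonneg _)
  have hlt : (σ * (c * U 1)) ^ 2 < (U 0 * s) ^ 2 := by
    have : (σ * (c * U 1)) ^ 2 = c ^ 2 * U 1 ^ 2 := by linear_combination c ^ 2 * U 1 ^ 2 * hσ
    rw [this, mul_pow, hs]
    nlinarith [sq_nonneg (U 1), mul_pos hd hd]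
  have hkey : σ * (U 0 * charSpeed γ σ U - U 1) * (U 0 ^ 2 - c ^ 2)
      = c * (U 0 * s + σ * (c * U 1)) := by
    linear_combination σ * U 0 * charSpeed_mul_sq_sub_sq_cs hγ hU σ + U 0 * c * s * hσ
  refine (mul_pos_iff_of_pos_right hd).1 (hkey ▸ mul_pos hc ?_)
  linarith [(abs_lt_of_sq_lt_sq' hlt hus).1]

lemma fderiv_charSpeed_charVec_pos {σ : ℝ} (hσ : σ ^ 2 = 1) :
    0 < fderiv ℝ (charSpeed γ σ) U (charVec γ σ U) := by
  have hfactor : 0 < 2 * cs γ U * √(U 0 ^ 2 + U 1 ^ 2 - cs γ U ^ 2) :=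
    mul_pos (mul_pos two_pos (cs_pos_of_mem_supersonic hγ hU))
      (Real.sqrt_pos.2 (sq_add_sq_sub_sq_cs_pos hγ hU))
  refine (mul_pos_iff_of_pos_left hfactor).1 ?_
  rw [fderiv_charSpeed_charVec hγ hU hσ]
  have := sign_mul_charSpeed_mul_sub_pos hγ hU hσ
  have : 0 < γ + 1 := by linarith
  positivity

lemma fderiv_charSpeed_charVec_of_eq_zero {σ : ℝ} (hσ : σ ^ 2 = 1) (hv : U 1 = 0) :
    fderiv ℝ (charSpeed γ σ) U (charVec γ σ U)
      = (γ + 1) * U 0 ^ 3 / (2 * (U 0 ^ 2 - cs γ U ^ 2) ^ 2) := by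
  have hI := fderiv_charSpeed_charVec hγ hU hσ
  have hc := (cs_pos_of_mem_supersonic hγ hU).ne'
  have hd := (sq_sub_sq_cs_pos hγ hU).ne'
  have hs0 := sq_add_sq_sub_sq_cs_pos hγ hU
  have hs := Real.sq_sqrt hs0.le
  have hs' := (Real.sqrt_pos.2 hs0).ne'
  simp only [charSpeed, hv] at hI hs hs' ⊢
  set s := √(U 0 ^ 2 + 0 ^ 2 - cs γ U ^ 2)
  rw [eq_div_iff (by positivity)]
  field_simp at hI
  set c := cs γ U
  set d := U 0 ^ 2 - c ^ 2
  refine mul_left_cancel₀ (mul_ne_zero (mul_ne_zero hc hs') hd) ?_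
  linear_combination hI + (γ + 1) * U 0 * c * s * (c ^ 2 * s ^ 2 * (σ ^ 2 + 1) + d ^ 2) * hσ
    + (γ + 1) * U 0 * c ^ 3 * s * hs

end supersonic

/-- At an unperturbed state `U₀ = (u₀, 0, p₀, ρ₀)` with `u₀ > c₀`, one has
`r̃₁ · ∇λ₁ = r̃₄ · ∇λ₄ > 0`, hence the normalization factors satisfy
`κ₁(U₀) = κ₄(U₀) > 0`; moreover this positivity persists on a neighborhood of `U₀`. -/
theorem kappa_eq_pos
    (γ u₀ p₀ ρ₀ : ℝ) (hγ : 1 < γ) (hρ : 0 < ρ₀) (hp : 0 < p₀)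
    (c₀ : ℝ) (hc : c₀ = Real.sqrt (γ * p₀ / ρ₀)) (hsup : c₀ < u₀)
    (U₀ : Fin 4 → ℝ) (hU : U₀ = ![u₀, 0, p₀, ρ₀]) :
    fderiv ℝ (lam1 γ) U₀ (rt1 γ U₀) = fderiv ℝ (lam4 γ) U₀ (rt4 γ U₀) ∧
    0 < fderiv ℝ (lam1 γ) U₀ (rt1 γ U₀) ∧
    (1 / fderiv ℝ (lam1 γ) U₀ (rt1 γ U₀) = 1 / fderiv ℝ (lam4 γ) U₀ (rt4 γ U₀) ∧
      0 < 1 / fderiv ℝ (lam1 γ) U₀ (rt1 γ U₀)) ∧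
    ∃ s : Set (Fin 4 → ℝ), IsOpen s ∧ U₀ ∈ s ∧ ∀ U ∈ s,
      0 < fderiv ℝ (lam1 γ) U (rt1 γ U) ∧ 0 < fderiv ℝ (lam4 γ) U (rt4 γ U) := by
  have hγ₀ : 0 < γ := by linarith
  have hmem : U₀ ∈ supersonic γ := by
    subst hU
    exact ⟨hp, hρ, by simpa [cs, ← hc] using hsup⟩
  have hv : U₀ 1 = 0 := by simp [hU]
  have hneg : (-1 : ℝ) ^ 2 = 1 := by norm_num
  have hone : (1 : ℝ) ^ 2 = 1 := one_pow 2
  rw [lam1_eq_charSpeed, lam4_eq_charSpeed, rt1_eq_charVec, rt4_eq_charVec]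
  have h₁ := fderiv_charSpeed_charVec_of_eq_zero hγ₀ hmem hneg hv
  have h₄ := fderiv_charSpeed_charVec_of_eq_zero hγ₀ hmem hone hv
  have hpos := fderiv_charSpeed_charVec_pos hγ₀ hmem hneg
  refine ⟨h₁.trans h₄.symm, hpos, ⟨by rw [h₁, h₄], one_div_pos.2 hpos⟩,
    supersonic γ, isOpen_supersonic γ, hmem, fun U hU => ?_⟩
  exact ⟨fderiv_charSpeed_charVec_pos hγ₀ hU hneg, fderiv_charSpeed_charVec_pos hγ₀ hU hone⟩
end
end

section
/- Velocity bounds across a strong shock: let γ>1, let ρ_b, ρ₁ > 0, u_b, u₁ > 0, p₁ > p_b > 0, and let c₁ = √(γp₁/ρ₁) with u₁ > c₁. Suppose there are reals σ ≠ 0 and v_b such that σ·(ρ_b u_b − ρ₁ u₁) = ρ_b v_b and σ·(ρ_b u_b² − ρ₁ u₁² + p_b − p₁) = ρ_b v_b u_b. Then u₁ < u_b < (1 + 1/γ)·u₁. In particular p₁ − p_b = ρ₁ u₁ (u_b − u₁). -/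
/-! Eliminating `ρ_b v_b` between the mass and momentum conditions and cancelling `σ` leaves the
pressure jump `p₁ - p_b = ρ₁ u₁ (u_b - u₁)`, which is positive, so `u_b > u₁`. It is also less
than `p₁`, and supersonicity `γ p₁ < ρ₁ u₁²` turns `ρ₁ u₁ (u_b - u₁) < p₁` into
`u_b - u₁ < u₁ / γ`. -/

theorem pressure_jump_eq_of_rankineHugoniot {R : Type*} [CommRing R] [NoZeroDivisors R]
    {ρ_b ρ₁ u_b u₁ p_b p₁ σ v_b : R} (hσ : σ ≠ 0)
    (h1 : σ * (ρ_b * u_b - ρ₁ * u₁) = ρ_b * v_b)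
    (h2 : σ * (ρ_b * u_b ^ 2 - ρ₁ * u₁ ^ 2 + p_b - p₁) = ρ_b * v_b * u_b) :
    p₁ - p_b = ρ₁ * u₁ * (u_b - u₁) := by
  have h : σ * (p₁ - p_b - ρ₁ * u₁ * (u_b - u₁)) = 0 := by
    linear_combination u_b * h1 - h2
  exact sub_eq_zero.mp ((mul_eq_zero.mp h).resolve_left hσ)

theorem lt_of_pressure_jump_eq {K : Type*} [Field K] [LinearOrder K] [IsStrictOrderedRing K]
    {ρ₁ u_b u₁ p_b p₁ : K} (hρ₁ : 0 < ρ₁) (hu₁ : 0 < u₁) (hp : p_b < p₁)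
    (hjump : p₁ - p_b = ρ₁ * u₁ * (u_b - u₁)) : u₁ < u_b := by
  have hpos : 0 < ρ₁ * u₁ * (u_b - u₁) := hjump ▸ sub_pos.mpr hp
  exact sub_pos.mp (pos_of_mul_pos_right hpos (mul_pos hρ₁ hu₁).le)

theorem mul_lt_mul_sq_of_sqrt_lt {γ ρ₁ u₁ p₁ : ℝ} (hρ₁ : 0 < ρ₁) (hu₁ : 0 < u₁)
    (hsup : √(γ * p₁ / ρ₁) < u₁) : γ * p₁ < ρ₁ * u₁ ^ 2 := by
  rw [Real.sqrt_lt' hu₁, div_lt_iff₀ hρ₁] at hsup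
  linarith

theorem lt_one_add_inv_mul_of_pressure_jump_eq {K : Type*} [Field K] [LinearOrder K]
    [IsStrictOrderedRing K] {γ ρ₁ u_b u₁ p_b p₁ : K} (hγ : 0 < γ) (hρ₁ : 0 < ρ₁) (hu₁ : 0 < u₁)
    (hp_b : 0 < p_b) (hsup : γ * p₁ < ρ₁ * u₁ ^ 2)
    (hjump : p₁ - p_b = ρ₁ * u₁ * (u_b - u₁)) : u_b < (1 + 1 / γ) * u₁ := by
  have hρu : 0 < ρ₁ * u₁ := mul_pos hρ₁ hu₁
  have hgap : ρ₁ * u₁ * (γ * (u_b - u₁)) < ρ₁ * u₁ * u₁ :=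
    calc ρ₁ * u₁ * (γ * (u_b - u₁)) = γ * (p₁ - p_b) := by rw [hjump]; ring
      _ < γ * p₁ := by gcongr; linarith
      _ < ρ₁ * u₁ * u₁ := by linear_combination hsup
  have hstep : u_b - u₁ < u₁ / γ := by
    rw [lt_div_iff₀ hγ, mul_comm]
    exact lt_of_mul_lt_mul_left hgap hρu.le
  calc u_b < u₁ + u₁ / γ := by linarith
    _ = (1 + 1 / γ) * u₁ := by ring

theorem strong_shock_velocity_bounds_general
    (γ ρ_b ρ₁ u_b u₁ p_b p₁ c₁ σ v_b : ℝ)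
    (hγ : 1 < γ) (hρ1 : 0 < ρ₁) (hu1 : 0 < u₁)
    (hpb : 0 < p_b) (hpp : p_b < p₁)
    (hc : c₁ = Real.sqrt (γ * p₁ / ρ₁)) (hsup : c₁ < u₁) (hσ : σ ≠ 0)
    (h1 : σ * (ρ_b * u_b - ρ₁ * u₁) = ρ_b * v_b)
    (h2 : σ * (ρ_b * u_b ^ 2 - ρ₁ * u₁ ^ 2 + p_b - p₁) = ρ_b * v_b * u_b) :
    u₁ < u_b ∧ u_b < (1 + 1 / γ) * u₁ ∧ p₁ - p_b = ρ₁ * u₁ * (u_b - u₁) := by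
  have hjump := pressure_jump_eq_of_rankineHugoniot hσ h1 h2
  have hsup' := mul_lt_mul_sq_of_sqrt_lt hρ1 hu1 (hc ▸ hsup)
  exact ⟨lt_of_pressure_jump_eq hρ1 hu1 hpp hjump,
    lt_one_add_inv_mul_of_pressure_jump_eq (by linarith) hρ1 hu1 hpb hsup' hjump, hjump⟩

/-- Velocity bounds across a strong shock: from the first two Rankine–Hugoniot conditions
between `U_b = (u_b, v_b, p_b, ρ_b)` and `U₁ = (u₁, 0, p₁, ρ₁)` with `p₁ > p_b` and
`u₁ > c₁`, one gets `u₁ < u_b < (1 + 1/γ) u₁` and `p₁ - p_b = ρ₁ u₁ (u_b - u₁)`. -/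
theorem strong_shock_velocity_bounds
    (γ ρ_b ρ₁ u_b u₁ p_b p₁ c₁ σ v_b : ℝ)
    (hγ : 1 < γ) (hρb : 0 < ρ_b) (hρ1 : 0 < ρ₁) (hub : 0 < u_b) (hu1 : 0 < u₁)
    (hpb : 0 < p_b) (hpp : p_b < p₁)
    (hc : c₁ = Real.sqrt (γ * p₁ / ρ₁)) (hsup : c₁ < u₁) (hσ : σ ≠ 0)
    (h1 : σ * (ρ_b * u_b - ρ₁ * u₁) = ρ_b * v_b)
    (h2 : σ * (ρ_b * u_b ^ 2 - ρ₁ * u₁ ^ 2 + p_b - p₁) = ρ_b * v_b * u_b) :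
    u₁ < u_b ∧ u_b < (1 + 1 / γ) * u₁ ∧ p₁ - p_b = ρ₁ * u₁ * (u_b - u₁) :=
  strong_shock_velocity_bounds_general γ ρ_b ρ₁ u_b u₁ p_b p₁ c₁ σ v_b hγ hρ1 hu1 hpb hpp hc hsup hσ
    h1 h2
end

section
/- Nondegeneracy determinant for interactions with the strong vortex sheet/entropy wave: let γ>1, let U₁=(u₁,0,p₁,ρ₁) with ρ₁>0, p₁>0, u₁>c₁ where c₁=√(γp₁/ρ₁); let σ₂₀,σ₃₀ ∈ ℝ and set U₂ := (u₁e^{σ₂₀}, 0, p₁, ρ₁e^{σ₃₀}), and assume u₁e^{σ₂₀} > c₂ where c₂=√(γp₁/(ρ₁e^{σ₃₀})). Then det( r̃₄(U₂), ∂_{σ₃}G(σ₃₀,σ₂₀,U₁), ∂_{σ₂}G(σ₃₀,σ₂₀,U₁), D_U G(σ₃₀,σ₂₀,U₁)·r̃₁(U₁) ) = ρ₁² u₁² e^{σ₂₀+σ₃₀} ( λ₄(U₂) e^{2σ₂₀+σ₃₀} + λ₄(U₁) ) > 0, where λ₄(U)=c/√(u²−c²) at a state with v=0, r̃_j(U)=(−λ_j,1,ρλ_j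 u,ρλ_j u/c²) for j=1,4 and λ₁=−λ₄ at such states. -/
noncomputable section

/-- Fourth characteristic speed `λ₄(U) = c/√(u² - c²)` at a state with `v = 0`. -/
def lam4z (γ : ℝ) (U : Fin 4 → ℝ) : ℝ :=
  cs γ U / Real.sqrt (U 0 ^ 2 - cs γ U ^ 2)

/-- Unnormalized eigenvector `r̃₄(U) = (-λ₄, 1, ρλ₄u, ρλ₄u/c²)` at a state with `v = 0`. -/
def rt4z (γ : ℝ) (U : Fin 4 → ℝ) : Fin 4 → ℝ :=
  ![-(lam4z γ U), 1, U 3 * lam4z γ U * U 0, U 3 * lam4z γ U * U 0 / cs γ U ^ 2]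

/-- Unnormalized eigenvector `r̃₁(U) = (-λ₁, 1, ρλ₁u, ρλ₁u/c²)` with `λ₁ = -λ₄`
at a state with `v = 0`. -/
def rt1z (γ : ℝ) (U : Fin 4 → ℝ) : Fin 4 → ℝ :=
  ![lam4z γ U, 1, -(U 3 * lam4z γ U * U 0), -(U 3 * lam4z γ U * U 0) / cs γ U ^ 2]

/-- The 4×4 matrix whose columns are the listed vectors. -/
def colMat (a b c d : Fin 4 → ℝ) : Matrix (Fin 4) (Fin 4) ℝ :=
  Matrix.of fun i j => ![a, b, c, d] j i

/-! Expanding along the two sparse columns `∂_{σ₃}G` and `∂_{σ₂}G` leaves a `2 × 2` minor in the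
`v`- and `p`-rows of `r̃₄(U₂)` and `D_U G · r̃₁(U₁)`, which is a sum of two positive multiples of
`λ₄(U₂)` and `λ₄(U₁)`. Both speeds are quotients of square roots, hence nonnegative, and
`λ₄(U₁) > 0` because `U₁` is supersonic. -/

theorem det_colMat_single_single (a d : Fin 4 → ℝ) (α β : ℝ) :
    (colMat a ![0, 0, 0, β] ![α, 0, 0, 0] d).det = α * β * (a 2 * d 1 - a 1 * d 2) := by
  simp [colMat, Matrix.det_succ_column_zero, Fin.sum_univ_succ, Fin.succAbove]
  ring

theorem cs_pos {γ : ℝ} {U : Fin 4 → ℝ} (hγ : 0 < γ) (hp : 0 < U 2) (hρ : 0 < U 3) :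
    0 < cs γ U :=
  Real.sqrt_pos.mpr (by positivity)

theorem lam4z_nonneg (γ : ℝ) (U : Fin 4 → ℝ) : 0 ≤ lam4z γ U :=
  div_nonneg (Real.sqrt_nonneg _) (Real.sqrt_nonneg _)

theorem lam4z_pos {γ : ℝ} {U : Fin 4 → ℝ} (hc : 0 < cs γ U) (hsup : cs γ U < U 0) :
    0 < lam4z γ U :=
  div_pos hc (Real.sqrt_pos.mpr (by nlinarith))

theorem vortex_det_pos_general
    (γ u₁ p₁ ρ₁ σ₂₀ σ₃₀ : ℝ) (hγ : 1 < γ) (hρ1 : 0 < ρ₁) (hp1 : 0 < p₁)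
    (c₁ : ℝ) (hc₁ : c₁ = Real.sqrt (γ * p₁ / ρ₁)) (hsup1 : c₁ < u₁)
    (U₁ U₂ : Fin 4 → ℝ) (hU₁ : U₁ = ![u₁, 0, p₁, ρ₁])
    (hU₂ : U₂ = ![u₁ * Real.exp σ₂₀, 0, p₁, ρ₁ * Real.exp σ₃₀]) :
    (colMat
        (rt4z γ U₂)
        ![0, 0, 0, ρ₁ * Real.exp σ₃₀]
        ![u₁ * Real.exp σ₂₀, 0, 0, 0]
        ((Matrix.diagonal ![Real.exp σ₂₀, Real.exp σ₂₀, 1, Real.exp σ₃₀]).mulVec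
          (rt1z γ U₁))).det =
      ρ₁ ^ 2 * u₁ ^ 2 * Real.exp (σ₂₀ + σ₃₀) *
        (lam4z γ U₂ * Real.exp (2 * σ₂₀ + σ₃₀) + lam4z γ U₁) ∧
    0 < (colMat
        (rt4z γ U₂)
        ![0, 0, 0, ρ₁ * Real.exp σ₃₀]
        ![u₁ * Real.exp σ₂₀, 0, 0, 0]
        ((Matrix.diagonal ![Real.exp σ₂₀, Real.exp σ₂₀, 1, Real.exp σ₃₀]).mulVec
          (rt1z γ U₁))).det := by
  have hcs₁ : cs γ U₁ = c₁ := by simp [cs, hU₁, hc₁]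
  have hc₁_pos : 0 < c₁ := hcs₁ ▸ cs_pos (by linarith) (by simpa [hU₁]) (by simpa [hU₁])
  have hu₁ : 0 < u₁ := hc₁_pos.trans hsup1
  have hlam₁ : 0 < lam4z γ U₁ := lam4z_pos (hcs₁ ▸ hc₁_pos) (by rw [hcs₁, hU₁]; exact hsup1)
  have hlam₂ : 0 ≤ lam4z γ U₂ := lam4z_nonneg γ U₂
  have hdet : (colMat (rt4z γ U₂) ![0, 0, 0, ρ₁ * Real.exp σ₃₀] ![u₁ * Real.exp σ₂₀, 0, 0, 0]
        ((Matrix.diagonal ![Real.exp σ₂₀, Real.exp σ₂₀, 1, Real.exp σ₃₀]).mulVec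
          (rt1z γ U₁))).det =
      ρ₁ ^ 2 * u₁ ^ 2 * Real.exp (σ₂₀ + σ₃₀) *
        (lam4z γ U₂ * Real.exp (2 * σ₂₀ + σ₃₀) + lam4z γ U₁) := by
    rw [det_colMat_single_single]
    simp only [rt4z, rt1z, hU₁, hU₂, Matrix.mulVec_diagonal, Real.exp_add, two_mul, Fin.isValue,
      Matrix.cons_val, Matrix.cons_val_zero, Matrix.cons_val_one]
    ring
  refine ⟨hdet, hdet ▸ ?_⟩
  positivity

/-- Nondegeneracy determinant for interactions of weak waves with the strong vortex
sheet/entropy wave: `det(r̃₄(U₂), ∂_{σ₃}G, ∂_{σ₂}G, D_U G · r̃₁(U₁))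
= ρ₁²u₁²e^{σ₂₀+σ₃₀}(λ₄(U₂)e^{2σ₂₀+σ₃₀} + λ₄(U₁)) > 0`. -/
theorem vortex_det_pos
    (γ u₁ p₁ ρ₁ σ₂₀ σ₃₀ : ℝ) (hγ : 1 < γ) (hρ1 : 0 < ρ₁) (hp1 : 0 < p₁)
    (c₁ : ℝ) (hc₁ : c₁ = Real.sqrt (γ * p₁ / ρ₁)) (hsup1 : c₁ < u₁)
    (U₁ U₂ : Fin 4 → ℝ) (hU₁ : U₁ = ![u₁, 0, p₁, ρ₁])
    (hU₂ : U₂ = ![u₁ * Real.exp σ₂₀, 0, p₁, ρ₁ * Real.exp σ₃₀])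
    (c₂ : ℝ) (hc₂ : c₂ = Real.sqrt (γ * p₁ / (ρ₁ * Real.exp σ₃₀)))
    (hsup2 : c₂ < u₁ * Real.exp σ₂₀) :
    (colMat
        (rt4z γ U₂)
        ![0, 0, 0, ρ₁ * Real.exp σ₃₀]
        ![u₁ * Real.exp σ₂₀, 0, 0, 0]
        ((Matrix.diagonal ![Real.exp σ₂₀, Real.exp σ₂₀, 1, Real.exp σ₃₀]).mulVec
          (rt1z γ U₁))).det =
      ρ₁ ^ 2 * u₁ ^ 2 * Real.exp (σ₂₀ + σ₃₀) *
        (lam4z γ U₂ * Real.exp (2 * σ₂₀ + σ₃₀) + lam4z γ U₁) ∧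
    0 < (colMat
        (rt4z γ U₂)
        ![0, 0, 0, ρ₁ * Real.exp σ₃₀]
        ![u₁ * Real.exp σ₂₀, 0, 0, 0]
        ((Matrix.diagonal ![Real.exp σ₂₀, Real.exp σ₂₀, 1, Real.exp σ₃₀]).mulVec
          (rt1z γ U₁))).det :=
  vortex_det_pos_general γ u₁ p₁ ρ₁ σ₂₀ σ₃₀ hγ hρ1 hp1 c₁ hc₁ hsup1 U₁ U₂ hU₁ hU₂
end
end

section
/- The reflection coefficient at the strong vortex sheet/entropy wave is strictly less than 1: in the setting where U₁=(u₁,0,p₁,ρ₁) with ρ₁>0, p₁>0, u₁>c₁=√(γp₁/ρ₁), γ>1, σ₂₀,σ₃₀∈ℝ, U₂:=(u₁e^{σ₂₀},0,p₁,ρ₁e^{σ₃₀}) with u₁e^{σ₂₀}>c₂=√(γp₁/(ρ₁e^{σ₃₀})), one has det( r̃₄(U₂), ∂_{σ₃}G(σ₃₀,σ₂₀,U₁), ∂_{σ₂}G(σ₃₀,σ₂₀,U₁), D_U G(σ₃₀,σ₂₀,U₁)·r̃₄(U₁) ) = ρ₁² u₁² e^{σ₂₀+σ₃₀} ( λ₄(U₂)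 e^{2σ₂₀+σ₃₀} − λ₄(U₁) ), and consequently | det( r̃₄(U₂), ∂_{σ₃}G, ∂_{σ₂}G, D_U G·r̃₄(U₁) ) | < det( r̃₄(U₂), ∂_{σ₃}G, ∂_{σ₂}G, D_U G·r̃₁(U₁) ). -/
/-! The wave columns `∂_{σ₃}G` and `∂_{σ₂}G` each have a single nonzero entry, so both
determinants reduce to the 2×2 minor in the `v`- and `p`-rows, where `r̃₁` and `r̃₄` differ only
by the sign of `λ₄`. Hence the two determinants are `K (λ₄(U₂) e^{2σ₂₀+σ₃₀} ∓ λ₄(U₁))` with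
`K = ρ₁²u₁²e^{σ₂₀+σ₃₀} > 0`, and since both characteristic speeds are positive in supersonic
flow, `|K (a - b)| < K (a + b)`. -/

noncomputable section

theorem det_colMat_sparse (a d : Fin 4 → ℝ) (r w : ℝ) :
    (colMat a ![0, 0, 0, r] ![w, 0, 0, 0] d).det = r * w * (a 2 * d 1 - a 1 * d 2) := by
  simp [colMat, Matrix.det_succ_row_zero, Fin.sum_univ_succ, Fin.succAbove]
  ring

theorem abs_mul_sub_lt_mul_add {k a b : ℝ} (hk : 0 < k) (ha : 0 < a) (hb : 0 < b) :
    |k * (a - b)| < k * (a + b) := by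
  rw [abs_mul, abs_of_pos hk]
  exact mul_lt_mul_of_pos_left (abs_sub_lt_iff.mpr ⟨by linarith, by linarith⟩) hk

section VortexEntropy

open Real

variable (γ u p ρ σ₂ σ₃ : ℝ)

theorem det_vortexEntropy_rt4z :
    (colMat (rt4z γ ![u * exp σ₂, 0, p, ρ * exp σ₃]) ![0, 0, 0, ρ * exp σ₃]
        ![u * exp σ₂, 0, 0, 0]
        ((Matrix.diagonal ![exp σ₂, exp σ₂, 1, exp σ₃]).mulVec (rt4z γ ![u, 0, p, ρ]))).det =
      ρ ^ 2 * u ^ 2 * exp (σ₂ + σ₃) *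
        (lam4z γ ![u * exp σ₂, 0, p, ρ * exp σ₃] * exp (2 * σ₂ + σ₃) -
          lam4z γ ![u, 0, p, ρ]) := by
  simp only [det_colMat_sparse, Matrix.mulVec_diagonal, rt4z, exp_add, two_mul, Matrix.cons_val,
    Matrix.cons_val_zero, Matrix.cons_val_one]
  ring

theorem det_vortexEntropy_rt1z :
    (colMat (rt4z γ ![u * exp σ₂, 0, p, ρ * exp σ₃]) ![0, 0, 0, ρ * exp σ₃]
        ![u * exp σ₂, 0, 0, 0]
        ((Matrix.diagonal ![exp σ₂, exp σ₂, 1, exp σ₃]).mulVec (rt1z γ ![u, 0, p, ρ]))).det =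
      ρ ^ 2 * u ^ 2 * exp (σ₂ + σ₃) *
        (lam4z γ ![u * exp σ₂, 0, p, ρ * exp σ₃] * exp (2 * σ₂ + σ₃) +
          lam4z γ ![u, 0, p, ρ]) := by
  simp only [det_colMat_sparse, Matrix.mulVec_diagonal, rt4z, rt1z, exp_add, two_mul,
    Matrix.cons_val, Matrix.cons_val_zero, Matrix.cons_val_one]
  ring

end VortexEntropy

/-- The reflection coefficient at the strong vortex sheet/entropy wave is strictly
less than 1: `det(r̃₄(U₂), ∂_{σ₃}G, ∂_{σ₂}G, D_U G · r̃₄(U₁))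
= ρ₁²u₁²e^{σ₂₀+σ₃₀}(λ₄(U₂)e^{2σ₂₀+σ₃₀} - λ₄(U₁))`, whose absolute value is less than
`det(r̃₄(U₂), ∂_{σ₃}G, ∂_{σ₂}G, D_U G · r̃₁(U₁))`. -/
theorem vortex_reflection_lt_one
    (γ u₁ p₁ ρ₁ σ₂₀ σ₃₀ : ℝ) (hγ : 1 < γ) (hρ1 : 0 < ρ₁) (hp1 : 0 < p₁)
    (c₁ : ℝ) (hc₁ : c₁ = Real.sqrt (γ * p₁ / ρ₁)) (hsup1 : c₁ < u₁)
    (U₁ U₂ : Fin 4 → ℝ) (hU₁ : U₁ = ![u₁, 0, p₁, ρ₁])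
    (hU₂ : U₂ = ![u₁ * Real.exp σ₂₀, 0, p₁, ρ₁ * Real.exp σ₃₀])
    (c₂ : ℝ) (hc₂ : c₂ = Real.sqrt (γ * p₁ / (ρ₁ * Real.exp σ₃₀)))
    (hsup2 : c₂ < u₁ * Real.exp σ₂₀) :
    (colMat
        (rt4z γ U₂)
        ![0, 0, 0, ρ₁ * Real.exp σ₃₀]
        ![u₁ * Real.exp σ₂₀, 0, 0, 0]
        ((Matrix.diagonal ![Real.exp σ₂₀, Real.exp σ₂₀, 1, Real.exp σ₃₀]).mulVec
          (rt4z γ U₁))).det =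
      ρ₁ ^ 2 * u₁ ^ 2 * Real.exp (σ₂₀ + σ₃₀) *
        (lam4z γ U₂ * Real.exp (2 * σ₂₀ + σ₃₀) - lam4z γ U₁) ∧
    |(colMat
        (rt4z γ U₂)
        ![0, 0, 0, ρ₁ * Real.exp σ₃₀]
        ![u₁ * Real.exp σ₂₀, 0, 0, 0]
        ((Matrix.diagonal ![Real.exp σ₂₀, Real.exp σ₂₀, 1, Real.exp σ₃₀]).mulVec
          (rt4z γ U₁))).det| <
      (colMat
        (rt4z γ U₂)
        ![0, 0, 0, ρ₁ * Real.exp σ₃₀]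
        ![u₁ * Real.exp σ₂₀, 0, 0, 0]
        ((Matrix.diagonal ![Real.exp σ₂₀, Real.exp σ₂₀, 1, Real.exp σ₃₀]).mulVec
          (rt1z γ U₁))).det := by
  subst hU₁ hU₂
  have hcs₁ : cs γ ![u₁, 0, p₁, ρ₁] = c₁ := by simp [cs, hc₁]
  have hcs₂ : cs γ ![u₁ * Real.exp σ₂₀, 0, p₁, ρ₁ * Real.exp σ₃₀] = c₂ := by simp [cs, hc₂]
  have hcs₁_pos : 0 < cs γ ![u₁, 0, p₁, ρ₁] := cs_pos (by linarith) hp1 hρ1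
  have hu₁ : 0 < u₁ := (hcs₁ ▸ hcs₁_pos).trans hsup1
  have hlam₁ : 0 < lam4z γ ![u₁, 0, p₁, ρ₁] := lam4z_pos hcs₁_pos (by rwa [hcs₁])
  have hlam₂ : 0 < lam4z γ ![u₁ * Real.exp σ₂₀, 0, p₁, ρ₁ * Real.exp σ₃₀] :=
    lam4z_pos (cs_pos (by linarith) hp1 (mul_pos hρ1 (Real.exp_pos σ₃₀))) (by rwa [hcs₂])
  rw [det_vortexEntropy_rt4z, det_vortexEntropy_rt1z]
  exact ⟨rfl, abs_mul_sub_lt_mul_add (by positivity) (by positivity) hlam₁⟩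
end
end
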